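/- Let T be the 26-letter alphabet of capital letters and let φ: Σ_2* → T* be the monoid homomorphism determined by φ(a_1) = BEG, φ(b_1) = END, φ(a_2) = FOR, φ(b_2) = END, and let L = φ(D_2) ⊆ T*. Then for every ℓ ≥ 0, the set of words of length ℓ in L is finite, of cardinality 2^k · catalan(k) if ℓ = 6k for some k ≥ 0, and of cardinality 0 if ℓ is not a multiple of 6. (This expresses the paper's identity H_L(z) = H_{D_2}(z³) = (1−√(1−8z⁶))/(4z⁶) on the level of coefficients.) -/

import Mathlib

/-- The Dyck language over `n` kinds of parentheses. -/
inductive Dyck (n : ℕ) : List (Fin n × Bool) → Prop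
  | nil : Dyck n []
  | append {u v : List (Fin n × Bool)} : Dyck n u → Dyck n v → Dyck n (u ++ v)
  | wrap {w : List (Fin n × Bool)} (i : Fin n) :
      Dyck n w → Dyck n ((i, true) :: (w ++ [(i, false)]))

/-- The 26-letter alphabet of capital letters, `A = 0, B = 1, …, Z = 25`. -/
abbrev Capital : Type := Fin 26

/-- The word "BEG" over the capital-letter alphabet. -/
def BEG : List Capital := [1, 4, 6]

/-- The word "END" over the capital-letter alphabet. -/
def END : List Capital := [4, 13, 3]

/-- The word "FOR" over the capital-letter alphabet. -/
def FOR : List Capital := [5, 14, 17]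

/-- The letterwise description of `φ : Σ₂* → T*`:
`φ(a₁) = BEG`, `φ(b₁) = END`, `φ(a₂) = FOR`, `φ(b₂) = END`. -/
def phiLetter : Fin 2 × Bool → List Capital
  | (⟨0, _⟩, true) => BEG
  | (⟨0, _⟩, false) => END
  | (⟨1, _⟩, true) => FOR
  | (⟨1, _⟩, false) => END

/-- The extension of `φ` to a monoid homomorphism `Σ₂* → T*`. -/
def phi (u : List (Fin 2 × Bool)) : List Capital := (u.map phiLetter).flatten

/-- The language `L = φ(D₂) ⊆ T*`. -/
def L : Language Capital := {w | ∃ u, Dyck 2 u ∧ w = phi u}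

/-
Every letter of `Σ₂` is sent to a three-letter word, so `φ` multiplies lengths by `3`, and Dyck
words have even length; hence `L` only has words of length `6k`. On `D₂` the map `φ` is
injective: reading `φ(u)` in blocks of three recovers `u` up to the colours of its closers, and
in a Dyck word each closer has the colour of its matching opener, which a stack restores.
The first-return decomposition `u = a_c w b_c v` gives the Catalan recursion with one
factor `n` per bracket pair, so `D_n` has `nᵏ · catalan k` words of length `2k`.
-/

open List Finset

namespace Dyck

variable {n : ℕ}

def openers (u : List (Fin n × Bool)) : ℕ := u.countP (·.2)

def closers (u : List (Fin n × Bool)) : ℕ := u.countP (!·.2)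

@[simp] lemma openers_nil : openers ([] : List (Fin n × Bool)) = 0 := rfl

@[simp] lemma closers_nil : closers ([] : List (Fin n × Bool)) = 0 := rfl

@[simp] lemma openers_cons (x : Fin n × Bool) (u : List (Fin n × Bool)) :
    openers (x :: u) = openers u + if x.2 then 1 else 0 := by
  obtain ⟨c, _ | _⟩ := x <;> simp [openers]

@[simp] lemma closers_cons (x : Fin n × Bool) (u : List (Fin n × Bool)) :
    closers (x :: u) = closers u + if x.2 then 0 else 1 := by
  obtain ⟨c, _ | _⟩ := x <;> simp [closers]

@[simp] lemma openers_append (u v : List (Fin n × Bool)) :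
    openers (u ++ v) = openers u + openers v := countP_append ..

@[simp] lemma closers_append (u v : List (Fin n × Bool)) :
    closers (u ++ v) = closers u + closers v := countP_append ..

lemma length_eq_openers_add_closers (u : List (Fin n × Bool)) :
    u.length = openers u + closers u := by
  induction u with
  | nil => rfl
  | cons x u ih => cases h : x.2 <;> simp [h, ih] <;> omega

lemma closers_eq_openers {u : List (Fin n × Bool)} (h : Dyck n u) : closers u = openers u := by
  induction h with
  | nil => rfl
  | append _ _ ihu ihv => simp [ihu, ihv]
  | wrap i _ ih => simp [ih]

lemma length_eq_two_mul_openers {u : List (Fin n × Bool)} (h : Dyck n u) :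
    u.length = 2 * openers u := by
  rw [length_eq_openers_add_closers, h.closers_eq_openers]; ring

lemma closers_take_le_openers_take {u : List (Fin n × Bool)} (h : Dyck n u) (i : ℕ) :
    closers (u.take i) ≤ openers (u.take i) := by
  induction h generalizing i with
  | nil => simp
  | append hu _ ihu ihv =>
    rw [take_append, closers_append, openers_append]
    exact Nat.add_le_add (ihu i) (ihv _)
  | @wrap w c hw ih =>
    cases i with
    | zero => simp
    | succ i =>
      have hlast : closers (take (i - w.length) [(c, false)]) ≤ 1 := by
        cases i - w.length <;> simp
      rw [take_succ_cons, take_append]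
      simp only [closers_cons, openers_cons, closers_append, openers_append, if_true] at hlast ⊢
      have := ih i
      omega

lemma cons_append_cons {c : Fin n} {w v : List (Fin n × Bool)} (hw : Dyck n w) (hv : Dyck n v) :
    Dyck n ((c, true) :: (w ++ (c, false) :: v)) := by
  simpa using (hw.wrap c).append hv

lemma eq_nil_or_eq_cons_append_cons {u : List (Fin n × Bool)} (h : Dyck n u) :
    u = [] ∨ ∃ c w v, Dyck n w ∧ Dyck n v ∧ u = (c, true) :: (w ++ (c, false) :: v) := by
  induction h with
  | nil => exact .inl rfl
  | @append u v _ hv ihu ihv =>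
    rcases ihu with rfl | ⟨c, w, v', hw, hv', rfl⟩
    · simpa using ihv
    · exact .inr ⟨c, w, v' ++ v, hw, hv'.append hv, by simp⟩
  | @wrap w c hw _ => exact .inr ⟨c, w, [], hw, nil, by simp⟩

/-- A balanced word `w` followed by a closer cannot be a proper prefix of a Dyck word, since
that prefix would have more closers than openers. -/
lemma length_le_of_append_eq {c : Fin n} {w v w' v' : List (Fin n × Bool)}
    (hw : closers w = openers w) (hw' : Dyck n w') (h : w ++ (c, false) :: v = w' ++ v') :
    w'.length ≤ w.length := by
  by_contra! hlt
  have hprefix : w ++ [(c, false)] = w'.take (w.length + 1) := by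
    have := congrArg (take (w.length + 1)) h
    rwa [take_append, take_of_length_le (by omega), take_append_of_le_length (by omega),
      Nat.add_sub_cancel_left, take_one, head?_cons, Option.toList_some] at this
  have := hw'.closers_take_le_openers_take (w.length + 1)
  simp [← hprefix] at this
  omega

lemma cons_append_cons_inj {c c' : Fin n} {w v w' v' : List (Fin n × Bool)}
    (hw : Dyck n w) (hw' : Dyck n w')
    (h : (c, true) :: (w ++ (c, false) :: v) = (c', true) :: (w' ++ (c', false) :: v')) :
    c = c' ∧ w = w' ∧ v = v' := by
  obtain ⟨hc, h⟩ := List.cons_eq_cons.mp h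
  obtain rfl : c = c' := congrArg Prod.fst hc
  have hlen : w.length = w'.length :=
    le_antisymm (length_le_of_append_eq hw'.closers_eq_openers hw h.symm)
      (length_le_of_append_eq hw.closers_eq_openers hw' h)
  obtain ⟨rfl, hv⟩ := append_inj h hlen
  exact ⟨rfl, rfl, (List.cons_eq_cons.mp hv).2⟩

end Dyck

section Counting

variable (n : ℕ)

def dyckWords (k : ℕ) : Set (List (Fin n × Bool)) := {u | Dyck n u ∧ u.length = 2 * k}

lemma finite_dyckWords (k : ℕ) : (dyckWords n k).Finite :=
  (List.finite_length_eq _ (2 * k)).subset fun _ hu => hu.2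

lemma dyckWords_zero : dyckWords n 0 = {[]} := by
  ext u
  simp only [dyckWords, mul_zero, length_eq_zero_iff, Set.mem_singleton_iff]
  exact ⟨And.right, fun h => ⟨h ▸ .nil, h⟩⟩

/-- The first-return decomposition `u = a_c w b_c v`. -/
noncomputable def dyckWordsSuccEquiv (k : ℕ) :
    Fin n × (Σ ij : antidiagonal k, dyckWords n ij.1.1 × dyckWords n ij.1.2) ≃
      dyckWords n (k + 1) :=
  Equiv.ofBijective
    (fun ⟨c, ⟨⟨_, hij⟩, ⟨w, hw⟩, ⟨v, hv⟩⟩⟩ => ⟨(c, true) :: (w ++ (c, false) :: v),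
      Dyck.cons_append_cons hw.1 hv.1, by
        rw [HasAntidiagonal.mem_antidiagonal] at hij
        simp only [length_cons, length_append, hw.2, hv.2, ← hij]
        ring⟩)
    (by
      constructor
      · rintro ⟨c, ⟨⟨i, j⟩, hij⟩, ⟨w, hw⟩, ⟨v, hv⟩⟩ ⟨c', ⟨⟨i', j'⟩, hij'⟩, ⟨w', hw'⟩, ⟨v', hv'⟩⟩ h
        obtain ⟨rfl, rfl, rfl⟩ := Dyck.cons_append_cons_inj hw.1 hw'.1 (congrArg Subtype.val h)
        rw [HasAntidiagonal.mem_antidiagonal] at hij hij'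
        have hi : w.length = 2 * i := hw.2
        have hi' : w.length = 2 * i' := hw'.2
        obtain rfl : i = i' := by omega
        obtain rfl : j = j' := by omega
        rfl
      · rintro ⟨u, hu, hlen⟩
        obtain rfl | ⟨c, w, v, hw, hv, rfl⟩ := hu.eq_nil_or_eq_cons_append_cons
        · simp at hlen
        have hw2 := hw.length_eq_two_mul_openers
        have hv2 := hv.length_eq_two_mul_openers
        simp only [length_cons, length_append] at hlen
        have hij : (Dyck.openers w, Dyck.openers v) ∈ antidiagonal k := by
          rw [HasAntidiagonal.mem_antidiagonal]; omega
        exact ⟨⟨c, ⟨⟨_, hij⟩, ⟨w, hw, hw2⟩, ⟨v, hv, hv2⟩⟩⟩, rfl⟩)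

lemma card_dyckWords_succ (k : ℕ) :
    Nat.card (dyckWords n (k + 1)) =
      n * ∑ ij ∈ antidiagonal k, Nat.card (dyckWords n ij.1) * Nat.card (dyckWords n ij.2) := by
  have := fun k => (finite_dyckWords n k).to_subtype
  rw [← Nat.card_congr (dyckWordsSuccEquiv n k), Nat.card_prod, Nat.card_sigma,
    ← Finset.sum_coe_sort (antidiagonal k)]
  simp [Nat.card_prod]

theorem card_dyckWords (k : ℕ) : Nat.card (dyckWords n k) = n ^ k * catalan k := by
  induction k using Nat.strong_induction_on with
  | _ k ih =>
    cases k with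
    | zero => simp [dyckWords_zero]
    | succ k =>
      rw [card_dyckWords_succ, catalan_succ', Finset.mul_sum, Finset.mul_sum]
      refine Finset.sum_congr rfl fun ij hij => ?_
      rw [HasAntidiagonal.mem_antidiagonal] at hij
      rw [ih ij.1 (by omega), ih ij.2 (by omega), ← hij]
      ring

end Counting

section ForgetClosers

variable {n : ℕ}

def forgetClosers : List (Fin n × Bool) → List (Option (Fin n)) :=
  map fun x => if x.2 then some x.1 else none

/-- Restores the colour of each closer from a stack of the colours of the pending openers. -/
def recolor : List (Fin n) → List (Option (Fin n)) → List (Fin n × Bool)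
  | _, [] => []
  | st, some c :: r => (c, true) :: recolor (c :: st) r
  | c :: st, none :: r => (c, false) :: recolor st r
  | [], none :: _ => []

lemma Dyck.recolor_forgetClosers_append {u : List (Fin n × Bool)} (h : Dyck n u)
    (st : List (Fin n)) (r : List (Option (Fin n))) :
    recolor st (forgetClosers u ++ r) = u ++ recolor st r := by
  induction h generalizing st r with
  | nil => rfl
  | append _ _ ihu ihv => simp [forgetClosers, ← ihv, ← ihu]
  | wrap c _ ih => simpa [forgetClosers, recolor] using ih (c :: st) (none :: r)

lemma injOn_forgetClosers : Set.InjOn (forgetClosers (n := n)) {u | Dyck n u} := by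
  intro u hu u' hu' h
  have hrec := hu.recolor_forgetClosers_append [] []
  rw [h, hu'.recolor_forgetClosers_append] at hrec
  simpa [recolor] using hrec.symm

end ForgetClosers

/-- Reads a word of `T*` in blocks of three letters, `BEG ↦ a₁`, `FOR ↦ a₂`, `END ↦ b`. -/
def decode : List Capital → List (Option (Fin 2))
  | a :: _ :: _ :: r => (if a = 1 then some 0 else if a = 5 then some 1 else none) :: decode r
  | _ => []

lemma phi_cons (x : Fin 2 × Bool) (u : List (Fin 2 × Bool)) :
    phi (x :: u) = phiLetter x ++ phi u := by
  simp [phi]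

lemma length_phi (u : List (Fin 2 × Bool)) : (phi u).length = 3 * u.length := by
  induction u with
  | nil => rfl
  | cons x u ih =>
    obtain ⟨c, b⟩ := x
    rw [phi_cons, length_append, ih]
    fin_cases c <;> cases b <;> simp [phiLetter, BEG, END, FOR] <;> ring

lemma decode_phi (u : List (Fin 2 × Bool)) : decode (phi u) = forgetClosers u := by
  induction u with
  | nil => rfl
  | cons x u ih =>
    obtain ⟨c, b⟩ := x
    rw [phi_cons]
    fin_cases c <;> cases b <;> simpa [phiLetter, BEG, END, FOR, decode, forgetClosers] using ih

lemma injOn_phi : Set.InjOn phi {u | Dyck 2 u} := fun u hu u' hu' h =>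
  injOn_forgetClosers hu hu' (by rw [← decode_phi, ← decode_phi, h])

lemma setOf_mem_L_length_eq (ℓ : ℕ) :
    {w | w ∈ L ∧ w.length = ℓ} = phi '' {u | Dyck 2 u ∧ 3 * u.length = ℓ} := by
  ext w
  constructor
  · rintro ⟨⟨u, hu, rfl⟩, hlen⟩
    exact ⟨u, ⟨hu, length_phi u ▸ hlen⟩, rfl⟩
  · rintro ⟨u, ⟨hu, hlen⟩, rfl⟩
    exact ⟨⟨u, hu, rfl⟩, length_phi u ▸ hlen⟩

/-- For every `ℓ ≥ 0`, the set of words of length `ℓ` in `L = φ(D₂)` is finite,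
of cardinality `2ᵏ · catalan k` if `ℓ = 6k`, and of cardinality `0` if `ℓ` is not
a multiple of `6`. -/
theorem stmt_14 :
    ∀ ℓ : ℕ,
      {w : List Capital | w ∈ L ∧ w.length = ℓ}.Finite ∧
      Nat.card {w : List Capital | w ∈ L ∧ w.length = ℓ}
        = if 6 ∣ ℓ then 2 ^ (ℓ / 6) * catalan (ℓ / 6) else 0 := by
  intro ℓ
  refine ⟨(List.finite_length_eq Capital ℓ).subset fun _ hw => hw.2, ?_⟩
  rw [setOf_mem_L_length_eq, Nat.card_image_of_injOn (injOn_phi.mono fun _ hu => hu.1)]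
  have hlen {u : List (Fin 2 × Bool)} (hu : Dyck 2 u) : 3 * u.length = 6 * Dyck.openers u := by
    rw [hu.length_eq_two_mul_openers]; ring
  split_ifs with h6
  · obtain ⟨k, rfl⟩ := h6
    have hwords : {u | Dyck 2 u ∧ 3 * u.length = 6 * k} = dyckWords 2 k := by
      ext u
      exact and_congr_right fun hu => by rw [hlen hu, hu.length_eq_two_mul_openers]; omega
    rw [hwords, card_dyckWords, Nat.mul_div_cancel_left k (by norm_num)]
  · have hempty : {u | Dyck 2 u ∧ 3 * u.length = ℓ} = ∅ :=
      Set.eq_empty_of_forall_notMem fun u ⟨hu, hℓ⟩ => h6 ⟨_, hℓ ▸ hlen hu⟩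
    simp [hempty]
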